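/- arXiv:2512.04942 — 4 statements merged into one kernel-verified Lean document; each statement's English description precedes it below -/
import Mathlib

section
/- Let R be a nonzero commutative ring and let A be an n×n matrix over R. If the ideal generated by all entries of A^n equals R, then for every positive integer k, the ideal generated by all entries of A^k equals R. -/
open Polynomial in
/-- A nilpotent `n × n` matrix over a field satisfies `B ^ n = 0`. -/
lemma aux_pow_card_eq_zero {K : Type*} [Field K] {n : ℕ}
    {B : Matrix (Fin n) (Fin n) K} (hB : IsNilpotent B) : B ^ n = 0 := by
  have h1 : B.charpoly - X ^ n = 0 := by
    have := Matrix.isNilpotent_charpoly_sub_pow_of_isNilpotent hB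
    simpa [Fintype.card_fin] using this.eq_zero
  have h2 : B.charpoly = X ^ n := by exact sub_eq_zero.mp h1
  have := B.aeval_self_charpoly
  rwa [h2, map_pow, aeval_X] at this

/-- If the ideal generated by the entries of `A ^ n` is the unit ideal of a nonzero
commutative ring `R`, then so is the ideal generated by the entries of `A ^ k`
for every positive integer `k`. -/
theorem stmt_0 (R : Type*) [CommRing R] [Nontrivial R] (n : ℕ)
    (A : Matrix (Fin n) (Fin n) R)
    (h : Ideal.span {r : R | ∃ i j, (A ^ n) i j = r} = ⊤) :
    ∀ k : ℕ, 0 < k → Ideal.span {r : R | ∃ i j, (A ^ k) i j = r} = ⊤ := by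
  intro k hk
  by_contra hne
  obtain ⟨m, hm, hle⟩ := Ideal.exists_le_maximal _ hne
  letI : Field (R ⧸ m) := Ideal.Quotient.field m
  let f : R →+* R ⧸ m := Ideal.Quotient.mk m
  let B : Matrix (Fin n) (Fin n) (R ⧸ m) := A.map f
  have hBk : B ^ k = 0 := by
    ext i j
    have : (A ^ k) i j ∈ m := hle (Ideal.subset_span ⟨i, j, rfl⟩)
    have h0 : f ((A ^ k) i j) = 0 := Ideal.Quotient.eq_zero_iff_mem.mpr this
    calc (B ^ k) i j = ((f.mapMatrix A) ^ k) i j := rfl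
      _ = (f.mapMatrix (A ^ k)) i j := by rw [map_pow]
      _ = 0 := h0
  have hBn : B ^ n = 0 := aux_pow_card_eq_zero ⟨k, hBk⟩
  have : Ideal.span {r : R | ∃ i j, (A ^ n) i j = r} ≤ m := by
    rw [Ideal.span_le]
    rintro r ⟨i, j, rfl⟩
    have : f ((A ^ n) i j) = (B ^ n) i j := by
      rw [show B ^ n = f.mapMatrix (A ^ n) by rw [map_pow]; rfl]; rfl
    rw [hBn] at this
    simp only [SetLike.mem_coe]
    exact Ideal.Quotient.eq_zero_iff_mem.mp (by simpa using this)
  rw [h] at this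
  exact hm.ne_top (top_le_iff.mp this)
end

section
/- Let p(x) ∈ ℝ[x] be a monic polynomial such that p(x)^2 has integer coefficients. Then p(x) has integer coefficients. -/
/-- A monic real polynomial whose square has integer coefficients has integer
coefficients. -/
theorem stmt_1 (p : Polynomial ℝ) (hp : p.Monic)
    (h : ∀ i, ∃ m : ℤ, (p ^ 2).coeff i = (m : ℝ)) :
    ∀ i, ∃ m : ℤ, p.coeff i = (m : ℝ) := by
  classical
  set n := p.natDegree with hn
  -- Step 1: lift p^2 to a monic integer polynomial q
  have hl : p ^ 2 ∈ Polynomial.lifts (algebraMap ℤ ℝ) := by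
    rw [Polynomial.lifts_iff_coeff_lifts]
    intro i
    obtain ⟨m, hm⟩ := h i
    exact ⟨m, hm.symm⟩
  obtain ⟨q, hq, -, hqm⟩ := Polynomial.lifts_and_degree_eq_and_monic hl (hp.pow 2)
  -- Step 2: coefficients of p are integral over ℤ
  have hdvd : p ∣ q.map (algebraMap ℤ ℝ) := by
    rw [hq]; exact ⟨p, sq p⟩
  have hint : ∀ i, IsIntegral ℤ (p.coeff i) := by
    have hmem := integralClosure.mem_lifts_of_monic_of_dvd_map (R := ℤ) ℝ hqm hp hdvd
    rw [Polynomial.lifts_iff_coeff_lifts] at hmem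
    intro i
    obtain ⟨x, hx⟩ := hmem i
    exact hx ▸ x.2
  -- Step 3: coefficients of p are rational
  set F : Subring ℝ := (algebraMap ℚ ℝ).range with hF
  have hhalf : (2 : ℝ)⁻¹ ∈ F := ⟨(2 : ℚ)⁻¹, by rw [map_inv₀, map_ofNat]⟩
  have hrat : ∀ k i, n ≤ i + k → p.coeff i ∈ F := by
    intro k
    induction k with
    | zero =>
      intro i hi
      simp only [Nat.add_zero] at hi
      rcases eq_or_lt_of_le hi with hi | hi
      · rw [← hi, Polynomial.Monic.coeff_natDegree hp]
        exact one_mem F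
      · rw [Polynomial.coeff_eq_zero_of_natDegree_lt hi]
        exact zero_mem F
    | succ k ih =>
      intro i hi
      rcases Nat.lt_or_ge i (n - k) with hik | hik
      swap
      · exact ih i (by omega)
      have hiltn : i < n := by omega
      have hikn : i + k + 1 = n := by omega
      -- the key coefficient identity
      obtain ⟨c, hc⟩ := h (n + i)
      have hexp : (p ^ 2).coeff (n + i) =
          ∑ j ∈ Finset.range (n + i + 1), p.coeff j * p.coeff (n + i - j) := by
        rw [sq, Polynomial.coeff_mul, Finset.Nat.sum_antidiagonal_eq_sum_range_succ_mk]
      have hmemi : i ∈ Finset.range (n + i + 1) := by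
        simp
      have hmemn : n ∈ (Finset.range (n + i + 1)).erase i := by
        simp [Finset.mem_erase]; omega
      set S := ∑ j ∈ ((Finset.range (n + i + 1)).erase i).erase n,
          p.coeff j * p.coeff (n + i - j) with hS
      have hsplit : ∑ j ∈ Finset.range (n + i + 1), p.coeff j * p.coeff (n + i - j)
          = p.coeff i * p.coeff n + (p.coeff n * p.coeff i + S) := by
        rw [hS, ← Finset.add_sum_erase _ _ hmemi, ← Finset.add_sum_erase _ _ hmemn]
        have h1 : n + i - i = n := by omega
        have h2 : n + i - n = i := by omega
        rw [h1, h2]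
      have hSF : S ∈ F := by
        apply Subring.sum_mem
        intro j hj
        simp only [Finset.mem_erase, Finset.mem_range] at hj
        obtain ⟨hjn, hji, hjr⟩ := hj
        rcases Nat.lt_or_ge j i with hlt | hge
        · have : p.coeff (n + i - j) = 0 :=
            Polynomial.coeff_eq_zero_of_natDegree_lt (by omega)
          rw [this, mul_zero]; exact zero_mem F
        rcases Nat.lt_or_ge n j with hlt | hge2
        · have : p.coeff j = 0 := Polynomial.coeff_eq_zero_of_natDegree_lt (by omega)
          rw [this, zero_mul]; exact zero_mem F
        · have h1 : i < j := lt_of_le_of_ne hge (Ne.symm hji)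
          have h2 : j < n := by omega
          exact mul_mem (ih j (by omega)) (ih (n + i - j) (by omega))
      have hcoeffn : p.coeff n = 1 := Polynomial.Monic.coeff_natDegree hp
      have heq : (c : ℝ) = p.coeff i + (p.coeff i + S) := by
        rw [← hc, hexp, hsplit, hcoeffn, mul_one, one_mul]
      have : p.coeff i = ((c : ℝ) - S) * (2 : ℝ)⁻¹ := by
        rw [heq]; ring
      rw [this]
      exact mul_mem (sub_mem ⟨(c : ℚ), by rw [map_intCast]⟩ hSF) hhalf
  -- Step 4: combine rationality and integrality
  intro i
  obtain ⟨r, hr⟩ := hrat (n - i) i (by omega)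
  have hri : IsIntegral ℤ r := by
    rw [← isIntegral_algebraMap_iff (algebraMap ℚ ℝ).injective]
    rw [hr]; exact hint i
  obtain ⟨m, hm⟩ := IsIntegrallyClosed.isIntegral_iff.mp hri
  refine ⟨m, ?_⟩
  rw [← hr, ← hm]
  simp
end

section
/- Let p + qi ∈ ℤ[i] be a Gaussian integer and for each s ≥ 1 write p_s + q_s i = (p + qi)^s. If gcd(p_2, q_2) = 1, then gcd(p_s, q_s) = 1 for all positive integers s. -/
/-!
If a rational prime `p` divides `z ^ s`, pick a Gaussian prime `π ∣ p`. Then `π ∣ z`, and since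
`p` is real, `p ∣ conj z ^ s` as well, so `π ∣ conj z`, i.e. `conj π ∣ z`. Hence
`N(π) = π * conj π ∣ z ^ 2`, and `p ∣ N(π)` because `N(π)` is a nontrivial divisor of `N(p) = p ^ 2`.
So every prime dividing both parts of `z ^ s` divides both parts of `z ^ 2`.
-/

namespace GaussianInt

theorem natCast_dvd_iff_dvd_gcd_re_im (n : ℕ) (z : GaussianInt) :
    ((n : ℤ) : GaussianInt) ∣ z ↔ n ∣ Int.gcd z.re z.im := by
  rw [Zsqrtd.intCast_dvd, Int.dvd_gcd_iff]

theorem natCast_dvd_norm_of_prime_dvd {p : ℕ} (hp : p.Prime) {π : GaussianInt} (hπ : Prime π)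
    (hπp : π ∣ ((p : ℤ) : GaussianInt)) : (p : ℤ) ∣ π.norm := by
  obtain ⟨c, hc⟩ := hπp
  have hnorm : π.norm.natAbs ∣ p ^ 2 :=
    ⟨c.norm.natAbs, by
      rw [← Int.natAbs_mul, ← Zsqrtd.norm_mul, ← hc, Zsqrtd.norm_intCast]
      simp [sq, Int.natAbs_mul]⟩
  obtain ⟨k, -, hk⟩ := (Nat.dvd_prime_pow hp).1 hnorm
  have hk0 : k ≠ 0 := by
    rintro rfl
    exact hπ.not_isUnit (Zsqrtd.norm_eq_one_iff.1 hk)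
  rw [Int.natCast_dvd, hk]
  exact dvd_pow_self p hk0

theorem natCast_dvd_sq_of_dvd_pow {p : ℕ} (hp : p.Prime) {z : GaussianInt} {s : ℕ}
    (h : ((p : ℤ) : GaussianInt) ∣ z ^ s) : ((p : ℤ) : GaussianInt) ∣ z ^ 2 := by
  have hp_unit : ¬IsUnit ((p : ℤ) : GaussianInt) := by
    intro hu
    have : (p : ℤ) ∣ 1 := (Zsqrtd.intCast_dvd_intCast _ _).1 (by simpa using hu.dvd)
    exact hp.not_dvd_one (by exact_mod_cast this)
  have hp_zero : ((p : ℤ) : GaussianInt) ≠ 0 := by exact_mod_cast hp.ne_zero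
  obtain ⟨π, hπ_irr, hπp⟩ := WfDvdMonoid.exists_irreducible_factor hp_unit hp_zero
  have hπ : Prime π := hπ_irr.prime
  have hπ_z : π ∣ z := hπ.dvd_of_dvd_pow (hπp.trans h)
  have hπ_star_z : π ∣ star z := by
    refine hπ.dvd_of_dvd_pow (n := s) (hπp.trans ?_)
    simpa [starRingEnd_apply] using map_dvd (starRingEnd GaussianInt) h
  have hstar_π_z : star π ∣ z := by
    simpa [starRingEnd_apply] using map_dvd (starRingEnd GaussianInt) hπ_star_z
  calc ((p : ℤ) : GaussianInt) ∣ (π.norm : GaussianInt) :=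
        Int.cast_dvd_cast _ _ (natCast_dvd_norm_of_prime_dvd hp hπ hπp)
    _ = π * star π := Zsqrtd.norm_eq_mul_conj π
    _ ∣ z ^ 2 := sq z ▸ mul_dvd_mul hπ_z hstar_π_z

end GaussianInt

/-- For a Gaussian integer `z = p + qi`, if the real and imaginary parts of `z ^ 2`
are coprime, then the real and imaginary parts of `z ^ s` are coprime for every
positive integer `s`. -/
theorem stmt_6 (z : GaussianInt)
    (h : Int.gcd (z ^ 2).re (z ^ 2).im = 1) :
    ∀ s : ℕ, 0 < s → Int.gcd (z ^ s).re (z ^ s).im = 1 := by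
  intro s _
  rw [Nat.eq_one_iff_not_exists_prime_dvd] at h ⊢
  intro p hp hps
  rw [← GaussianInt.natCast_dvd_iff_dvd_gcd_re_im] at hps
  have hp_sq := GaussianInt.natCast_dvd_sq_of_dvd_pow hp hps
  exact h p hp ((GaussianInt.natCast_dvd_iff_dvd_gcd_re_im p _).1 hp_sq)
end

section
/- Let A be a 2×2 integer matrix and s ≥ 2 a positive integer. If the gcd of the four entries of A^s is greater than 1, then the gcd of the four entries of A^2 is greater than 1. -/
/-!
If a prime `p` divides every entry of `A ^ s`, then `A` is nilpotent modulo `p`. Over the field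
`ZMod p` a nilpotent `2 × 2` matrix has characteristic polynomial `X ^ 2`, so by Cayley–Hamilton
its square vanishes: `p` divides every entry of `A ^ 2`. Moreover `A ^ 2 ≠ 0` because
`A ^ s ≠ 0` and `s ≥ 2`, so the gcd of the entries of `A ^ 2` is a positive multiple of `p`.
-/

open Polynomial

namespace Matrix

theorem pow_card_eq_zero_of_isNilpotent {R n : Type*} [CommRing R] [IsReduced R]
    [Fintype n] [DecidableEq n] {M : Matrix n n R} (hM : IsNilpotent M) :
    M ^ Fintype.card n = 0 := by
  have hχ : M.charpoly = X ^ Fintype.card n :=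
    sub_eq_zero.mp <| Polynomial.ext fun i => by
      simpa using
        (Polynomial.isNilpotent_iff.mp (isNilpotent_charpoly_sub_pow_of_isNilpotent hM) i).eq_zero
  simpa [hχ] using M.aeval_self_charpoly

def entryGcd (A : Matrix (Fin 2) (Fin 2) ℤ) : ℕ :=
  Int.gcd (Int.gcd (A 0 0) (A 0 1)) (Int.gcd (A 1 0) (A 1 1))

theorem entryGcd_eq_zero_iff {A : Matrix (Fin 2) (Fin 2) ℤ} : entryGcd A = 0 ↔ A = 0 := by
  simp [entryGcd, Int.gcd_eq_zero_iff, ← Matrix.ext_iff, Fin.forall_fin_two, and_assoc]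

theorem dvd_entryGcd_iff {A : Matrix (Fin 2) (Fin 2) ℤ} {d : ℕ} :
    d ∣ entryGcd A ↔ A.map (Int.castRingHom (ZMod d)) = 0 := by
  rw [entryGcd, Int.dvd_gcd_iff, Int.dvd_coe_gcd_iff, Int.dvd_coe_gcd_iff]
  simp [← Matrix.ext_iff, Fin.forall_fin_two, ZMod.intCast_zmod_eq_zero_iff_dvd, and_assoc]

end Matrix

open Matrix

/-- For a `2 × 2` integer matrix `A` and `s ≥ 2`: if the gcd of the entries of
`A ^ s` exceeds `1`, then so does the gcd of the entries of `A ^ 2`. -/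
theorem stmt_7 (A : Matrix (Fin 2) (Fin 2) ℤ) (s : ℕ) (hs : 2 ≤ s)
    (h : 1 < Int.gcd (Int.gcd ((A ^ s) 0 0) ((A ^ s) 0 1))
        (Int.gcd ((A ^ s) 1 0) ((A ^ s) 1 1))) :
    1 < Int.gcd (Int.gcd ((A ^ 2) 0 0) ((A ^ 2) 0 1))
        (Int.gcd ((A ^ 2) 1 0) ((A ^ 2) 1 1)) := by
  change 1 < entryGcd (A ^ s) at h
  change 1 < entryGcd (A ^ 2)
  set p := (entryGcd (A ^ s)).minFac
  have hp : Fact p.Prime := ⟨Nat.minFac_prime h.ne'⟩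
  have hAs : A ^ s ≠ 0 := fun h0 => by simp [entryGcd_eq_zero_iff.2 h0] at h
  have hA2 : A ^ 2 ≠ 0 := fun h0 => hAs (by rw [← Nat.sub_add_cancel hs, pow_add, h0, mul_zero])
  have hnil : IsNilpotent (A.map (Int.castRingHom (ZMod p))) :=
    ⟨s, by rw [← Matrix.map_pow]; exact dvd_entryGcd_iff.1 (Nat.minFac_dvd _)⟩
  have hp_dvd : p ∣ entryGcd (A ^ 2) := by
    rw [dvd_entryGcd_iff, Matrix.map_pow]
    simpa using pow_card_eq_zero_of_isNilpotent hnil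
  have hpos : 0 < entryGcd (A ^ 2) := Nat.pos_of_ne_zero (mt entryGcd_eq_zero_iff.1 hA2)
  exact hp.out.one_lt.trans_le (Nat.le_of_dvd hpos hp_dvd)
end
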